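/- arXiv:2502.06526 — 3 statements merged into one kernel-verified Lean document; each statement's English description precedes it below -/
import Mathlib

section
/- For all density matrices ρ and σ on the same finite-dimensional complex Hilbert space, D₂(ρ‖σ) ≥ log(1 + ‖ρ − σ‖₁²). -/
/-!
With `χ² := Tr[(ρ - σ) σ^{-1/2} (ρ - σ) σ^{-1/2}]` (this is `Q2R (ρ - σ) σ`), expanding the square
and using `supp ρ ⊆ supp σ` gives `Q₂(ρ‖σ) = χ² + 2 Tr(ρ - σ) + Tr σ = 1 + χ²`. It remains to show
`‖X‖₁² ≤ χ²` for `X = ρ - σ`. Write `‖X‖₁ = Re Tr[X W]` with `W` the sign of `X`, and pass to an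
eigenbasis of `σ` with eigenvalues `eᵢ`. Cauchy–Schwarz with the weights `√(eᵢ eⱼ)` gives
`‖X‖₁² ≤ χ² · ∑ᵢⱼ |Wⱼᵢ|² √(eᵢ eⱼ)`, and since `√(eᵢ eⱼ) ≤ (eᵢ + eⱼ)/2` while the rows and columns
of `W` have norm at most `1`, the last sum is at most `Tr σ = 1`.
-/

open scoped Matrix Kronecker BigOperators ENNReal ComplexOrder Classical

noncomputable section

variable {d : Type*} [Fintype d] [DecidableEq d]

/-- Apply a real function to the eigenvalues of a Hermitian matrix (spectral
functional calculus). -/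
def herFun {A : Matrix d d ℂ} (hA : A.IsHermitian) (f : ℝ → ℝ) : Matrix d d ℂ :=
  (hA.eigenvectorUnitary : Matrix d d ℂ) *
    Matrix.diagonal (fun i => (f (hA.eigenvalues i) : ℂ)) *
    (hA.eigenvectorUnitary : Matrix d d ℂ)ᴴ

/-- Functional calculus, extended by the junk value `0` to non-Hermitian matrices. -/
def matFun (A : Matrix d d ℂ) (f : ℝ → ℝ) : Matrix d d ℂ :=
  if h : A.IsHermitian then herFun h f else 0

/-- Real power of a Hermitian matrix, taken on its support (Moore–Penrose
convention: zero eigenvalues are sent to zero; negative powers are pseudo-inverses). -/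
def matPow (A : Matrix d d ℂ) (r : ℝ) : Matrix d d ℂ :=
  matFun A (fun x => if x = 0 then 0 else Real.rpow x r)

/-- Logarithm of a Hermitian matrix on its support. -/
def matLog (A : Matrix d d ℂ) : Matrix d d ℂ := matFun A Real.log

/-- A density matrix: positive semidefinite with unit trace. -/
def IsDensity (A : Matrix d d ℂ) : Prop := A.PosSemidef ∧ A.trace = 1

/-- `suppLE ρ σ` : the support of `ρ` is contained in the support of `σ`
(for Hermitian matrices this is equivalent to `ker σ ≤ ker ρ`). -/
def suppLE (ρ σ : Matrix d d ℂ) : Prop :=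
  LinearMap.ker σ.mulVecLin ≤ LinearMap.ker ρ.mulVecLin

/-- Trace (nuclear) norm of a matrix: `Tr √(AᴴA)`. -/
def traceNorm (A : Matrix d d ℂ) : ℝ := (Matrix.trace (matPow (Aᴴ * A) (1/2))).re

/-- The real-valued collision quantity `Tr[ρ σ^{-1/2} ρ σ^{-1/2}]`. -/
def Q2R (ρ σ : Matrix d d ℂ) : ℝ :=
  (Matrix.trace (ρ * matPow σ (-(1/2)) * ρ * matPow σ (-(1/2)))).re

/-- `Q₂(ρ‖σ) = Tr[ρ σ^{-1/2} ρ σ^{-1/2}]`, equal to `+∞` unless `supp ρ ⊆ supp σ`. -/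
def Q2 (ρ σ : Matrix d d ℂ) : ℝ≥0∞ :=
  if suppLE ρ σ then ENNReal.ofReal (Q2R ρ σ) else ∞

/-- Collision relative entropy `D₂(ρ‖σ) = log Q₂(ρ‖σ)`. -/
def D2 (ρ σ : Matrix d d ℂ) : EReal := ENNReal.log (Q2 ρ σ)

/-- Fidelity `F(ρ,σ) = ‖√ρ √σ‖₁`. -/
def fidelity (ρ σ : Matrix d d ℂ) : ℝ := traceNorm (matPow ρ (1/2) * matPow σ (1/2))

/-- Purified distance `P(ρ,σ) = √(1 - F(ρ,σ)²)`. -/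
def purifiedDist (ρ σ : Matrix d d ℂ) : ℝ := Real.sqrt (1 - fidelity ρ σ ^ 2)

open Matrix Unitary

lemma diagonal_comp_mul_eq_mul_diagonal_comp {c c' : d → ℝ} {X : Matrix d d ℂ}
    (h : diagonal (fun i => (c i : ℂ)) * X = X * diagonal (fun i => (c' i : ℂ))) (f : ℝ → ℝ) :
    diagonal (fun i => (f (c i) : ℂ)) * X = X * diagonal (fun i => (f (c' i) : ℂ)) := by
  ext i j
  have hij := congr_fun₂ h i j
  simp only [diagonal_mul, mul_diagonal] at hij ⊢
  by_cases hX : X i j = 0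
  · simp [hX]
  · have hc : c i = c' j := by exact_mod_cast mul_right_cancel₀ hX (hij.trans (mul_comm _ _))
    rw [hc, mul_comm]

lemma trace_conjStarAlgAut (u : unitary (Matrix d d ℂ)) (X : Matrix d d ℂ) :
    (conjStarAlgAut ℂ _ u X).trace = X.trace := by
  rw [conjStarAlgAut_apply, trace_mul_cycle, Unitary.coe_star_mul_self, one_mul]

lemma isHermitian_conjStarAlgAut_diagonal (u : unitary (Matrix d d ℂ)) (c : d → ℝ) :
    (conjStarAlgAut ℂ _ u (diagonal (fun i => (c i : ℂ)))).IsHermitian := by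
  refine IsSelfAdjoint.map ?_ _
  simp [IsSelfAdjoint, star_eq_conjTranspose, diagonal_conjTranspose, Pi.star_def]

lemma herFun_eq_conjStarAlgAut {A : Matrix d d ℂ} (hA : A.IsHermitian) (f : ℝ → ℝ) :
    herFun hA f =
      conjStarAlgAut ℂ _ hA.eigenvectorUnitary (diagonal fun i => (f (hA.eigenvalues i) : ℂ)) := by
  rw [herFun, conjStarAlgAut_apply, star_eq_conjTranspose]

lemma conjStarAlgAut_diagonal_comp_eq_of_eq {u v : unitary (Matrix d d ℂ)} {c c' : d → ℝ}
    (h : conjStarAlgAut ℂ _ u (diagonal fun i => (c i : ℂ)) =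
      conjStarAlgAut ℂ _ v (diagonal fun i => (c' i : ℂ))) (f : ℝ → ℝ) :
    conjStarAlgAut ℂ _ u (diagonal fun i => (f (c i) : ℂ)) =
      conjStarAlgAut ℂ _ v (diagonal fun i => (f (c' i) : ℂ)) := by
  simp only [conjStarAlgAut_apply] at h ⊢
  set U : Matrix d d ℂ := ↑u
  set V : Matrix d d ℂ := ↑v
  have hU : star U * U = 1 := Unitary.coe_star_mul_self u
  have hU' : U * star U = 1 := Unitary.coe_mul_star_self u
  have hV : star V * V = 1 := Unitary.coe_star_mul_self v
  have hV' : V * star V = 1 := Unitary.coe_mul_star_self v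
  have hw : diagonal (fun i => (c i : ℂ)) * (star U * V) =
      (star U * V) * diagonal (fun i => (c' i : ℂ)) := by
    have := congr_arg (fun X => star U * X * V) h
    simp only [← mul_assoc, hU, one_mul] at this
    simpa only [mul_assoc, hV, mul_one] using this
  have hf := diagonal_comp_mul_eq_mul_diagonal_comp hw f
  calc U * diagonal (fun i => (f (c i) : ℂ)) * star U
      = U * (diagonal (fun i => (f (c i) : ℂ)) * (star U * V)) * star V := by
        simp only [mul_assoc, hV', mul_one]
    _ = V * diagonal (fun i => (f (c' i) : ℂ)) * star V := by
        rw [hf]; simp only [← mul_assoc, hU', one_mul]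

lemma matFun_conjStarAlgAut_diagonal (u : unitary (Matrix d d ℂ)) (c : d → ℝ) (f : ℝ → ℝ) :
    matFun (conjStarAlgAut ℂ _ u (diagonal fun i => (c i : ℂ))) f =
      conjStarAlgAut ℂ _ u (diagonal fun i => (f (c i) : ℂ)) := by
  have hA := isHermitian_conjStarAlgAut_diagonal u c
  rw [matFun, dif_pos hA, herFun_eq_conjStarAlgAut]
  exact conjStarAlgAut_diagonal_comp_eq_of_eq hA.spectral_theorem.symm f

lemma Matrix.IsHermitian.eq_conjStarAlgAut_diagonal {A : Matrix d d ℂ} (hA : A.IsHermitian) :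
    A = conjStarAlgAut ℂ _ hA.eigenvectorUnitary (diagonal fun i => (hA.eigenvalues i : ℂ)) :=
  hA.spectral_theorem

lemma matFun_conjStarAlgAut (u : unitary (Matrix d d ℂ)) {A : Matrix d d ℂ} (hA : A.IsHermitian)
    (f : ℝ → ℝ) : matFun (conjStarAlgAut ℂ _ u A) f = conjStarAlgAut ℂ _ u (matFun A f) := by
  rw [hA.eq_conjStarAlgAut_diagonal, ← conjStarAlgAut_mul_apply, matFun_conjStarAlgAut_diagonal,
    matFun_conjStarAlgAut_diagonal, conjStarAlgAut_mul_apply]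

lemma traceNorm_conjStarAlgAut (u : unitary (Matrix d d ℂ)) (X : Matrix d d ℂ) :
    traceNorm (conjStarAlgAut ℂ _ u X) = traceNorm X := by
  have hXX : (conjStarAlgAut ℂ _ u X)ᴴ * conjStarAlgAut ℂ _ u X =
      conjStarAlgAut ℂ _ u (Xᴴ * X) := by
    rw [← star_eq_conjTranspose, ← map_star, map_mul, star_eq_conjTranspose]
  rw [traceNorm, traceNorm, hXX, matPow,
    matFun_conjStarAlgAut u (isHermitian_conjTranspose_mul_self X), trace_conjStarAlgAut, matPow]

lemma re_trace_conjStarAlgAut_diagonal (u : unitary (Matrix d d ℂ)) (c : d → ℝ) :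
    (conjStarAlgAut ℂ _ u (diagonal fun i => (c i : ℂ))).trace.re = ∑ i, c i := by
  rw [trace_conjStarAlgAut, trace_diagonal, Complex.re_sum]
  simp

lemma traceNorm_eq_sum_abs_eigenvalues {X : Matrix d d ℂ} (hX : X.IsHermitian) :
    traceNorm X = ∑ i, |hX.eigenvalues i| := by
  have hXX : Xᴴ * X = conjStarAlgAut ℂ _ hX.eigenvectorUnitary
      (diagonal fun i => ((hX.eigenvalues i ^ 2 : ℝ) : ℂ)) := by
    conv_lhs => rw [hX.eq, hX.eq_conjStarAlgAut_diagonal]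
    rw [← map_mul, diagonal_mul_diagonal]
    simp [sq]
  rw [traceNorm, matPow, hXX, matFun_conjStarAlgAut_diagonal, re_trace_conjStarAlgAut_diagonal]
  refine Finset.sum_congr rfl fun i _ => ?_
  split_ifs with h
  · simp [pow_eq_zero_iff two_ne_zero |>.mp h]
  · rw [Real.rpow_eq_pow, ← Real.sqrt_eq_rpow, Real.sqrt_sq_eq_abs]

lemma conjStarAlgAut_diagonal_apply_self (u : unitary (Matrix d d ℂ)) (c : d → ℝ) (i : d) :
    conjStarAlgAut ℂ _ u (diagonal fun i => (c i : ℂ)) i i =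
      ((∑ k, c k * ‖(u : Matrix d d ℂ) i k‖ ^ 2 : ℝ) : ℂ) := by
  simp only [conjStarAlgAut_apply, mul_apply, star_apply, diagonal_apply, mul_ite, mul_zero,
    Finset.sum_ite_eq', Finset.mem_univ, if_true]
  push_cast
  refine Finset.sum_congr rfl fun k _ => ?_
  rw [← Complex.conj_mul', Complex.star_def]
  ring

lemma sum_norm_sq_conjStarAlgAut_diagonal_le_one (u : unitary (Matrix d d ℂ)) {s : d → ℝ}
    (hs : ∀ k, s k ^ 2 ≤ 1) (i : d) :
    ∑ j, ‖conjStarAlgAut ℂ _ u (diagonal fun k => (s k : ℂ)) i j‖ ^ 2 ≤ 1 := by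
  set W := conjStarAlgAut ℂ _ u (diagonal fun k => (s k : ℂ))
  have hW : W.IsHermitian := isHermitian_conjStarAlgAut_diagonal u s
  have hWW : W * W = conjStarAlgAut ℂ _ u (diagonal fun k => ((s k ^ 2 : ℝ) : ℂ)) := by
    rw [← map_mul, diagonal_mul_diagonal]
    simp [sq]
  have hrow : ((∑ j, ‖W i j‖ ^ 2 : ℝ) : ℂ) = (W * W) i i := by
    rw [mul_apply]
    push_cast
    refine Finset.sum_congr rfl fun j _ => ?_
    rw [← hW.apply j i, Complex.star_def, Complex.mul_conj']
  have hunit : ∑ k, ‖(u : Matrix d d ℂ) i k‖ ^ 2 = 1 := by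
    have := conjStarAlgAut_diagonal_apply_self u 1 i
    simp only [Pi.one_apply, Complex.ofReal_one, diagonal_one, map_one, one_apply_eq,
      one_mul] at this
    exact_mod_cast this.symm
  have hrow_eq : ∑ j, ‖W i j‖ ^ 2 = ∑ k, s k ^ 2 * ‖(u : Matrix d d ℂ) i k‖ ^ 2 := by
    exact_mod_cast hrow.trans (hWW ▸ conjStarAlgAut_diagonal_apply_self u _ i)
  rw [hrow_eq, ← hunit]
  exact Finset.sum_le_sum fun k _ => mul_le_of_le_one_left (sq_nonneg _) (hs k)

lemma Matrix.IsHermitian.exists_traceNorm_eq_re_trace_mul {X : Matrix d d ℂ}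
    (hX : X.IsHermitian) :
    ∃ W : Matrix d d ℂ, (∀ i, ∑ j, ‖W i j‖ ^ 2 ≤ 1) ∧ (∀ j, ∑ i, ‖W i j‖ ^ 2 ≤ 1) ∧
      traceNorm X = (X * W).trace.re := by
  set s : d → ℝ := fun k => SignType.sign (hX.eigenvalues k)
  set W := conjStarAlgAut ℂ _ hX.eigenvectorUnitary (diagonal fun k => (s k : ℂ))
  have hW : W.IsHermitian := isHermitian_conjStarAlgAut_diagonal _ s
  have hs : ∀ k, s k ^ 2 ≤ 1 := fun k => by
    rcases lt_trichotomy (hX.eigenvalues k) 0 with h | h | h <;> simp [s, h]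
  have hrow := sum_norm_sq_conjStarAlgAut_diagonal_le_one hX.eigenvectorUnitary hs
  refine ⟨W, hrow, fun j => ?_, ?_⟩
  · calc ∑ i, ‖W i j‖ ^ 2 = ∑ i, ‖W j i‖ ^ 2 :=
          Finset.sum_congr rfl fun i _ => by rw [← hW.apply i j, norm_star]
      _ ≤ 1 := hrow j
  · rw [traceNorm_eq_sum_abs_eigenvalues hX]
    conv_rhs => rw [hX.eq_conjStarAlgAut_diagonal]
    rw [← map_mul, diagonal_mul_diagonal]
    simp only [← Complex.ofReal_mul]
    rw [re_trace_conjStarAlgAut_diagonal]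
    exact Finset.sum_congr rfl fun k _ => (self_mul_sign _).symm

lemma re_trace_mul_sq_le {ι : Type*} [Fintype ι] {e : ι → ℝ} (he : ∀ i, 0 ≤ e i)
    {Y : Matrix ι ι ℂ} (hY : ∀ i j, e i = 0 ∨ e j = 0 → Y i j = 0) (W : Matrix ι ι ℂ) :
    (Y * W).trace.re ^ 2 ≤
      (∑ i, ∑ j, ‖Y i j‖ ^ 2 / √(e i * e j)) * ∑ i, ∑ j, ‖W j i‖ ^ 2 * √(e i * e j) := by
  have htrace : |(Y * W).trace.re| ≤ ∑ i, ∑ j, ‖Y i j‖ * ‖W j i‖ := by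
    refine (Complex.abs_re_le_norm _).trans ?_
    simp only [trace, diag, mul_apply]
    refine (norm_sum_le _ _).trans (Finset.sum_le_sum fun i _ => (norm_sum_le _ _).trans ?_)
    simp only [norm_mul, le_refl]
  have hterm : ∀ p : ι × ι, (‖Y p.1 p.2‖ * ‖W p.2 p.1‖) ^ 2 ≤
      ‖Y p.1 p.2‖ ^ 2 / √(e p.1 * e p.2) * (‖W p.2 p.1‖ ^ 2 * √(e p.1 * e p.2)) := by
    rintro ⟨i, j⟩
    by_cases hs : √(e i * e j) = 0
    · have : e i = 0 ∨ e j = 0 := by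
        rw [← mul_eq_zero]
        exact le_antisymm (Real.sqrt_eq_zero'.mp hs) (mul_nonneg (he i) (he j))
      simp [hY i j this]
    · exact le_of_eq (by field_simp)
  have hCS := Finset.sum_sq_le_sum_mul_sum_of_sq_le_mul Finset.univ
    (fun p _ => by positivity) (fun p _ => by positivity) (fun p _ => hterm p)
  simp only [Fintype.sum_prod_type] at hCS
  calc (Y * W).trace.re ^ 2 = |(Y * W).trace.re| ^ 2 := (sq_abs _).symm
    _ ≤ (∑ i, ∑ j, ‖Y i j‖ * ‖W j i‖) ^ 2 := pow_le_pow_left₀ (abs_nonneg _) htrace 2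
    _ ≤ _ := hCS

lemma sum_sum_norm_sq_mul_sqrt_le {ι : Type*} [Fintype ι] {e : ι → ℝ} (he : ∀ i, 0 ≤ e i)
    {W : Matrix ι ι ℂ} (hrow : ∀ i, ∑ j, ‖W i j‖ ^ 2 ≤ 1)
    (hcol : ∀ j, ∑ i, ‖W i j‖ ^ 2 ≤ 1) :
    ∑ i, ∑ j, ‖W j i‖ ^ 2 * √(e i * e j) ≤ ∑ i, e i := by
  have hamgm : ∀ i j, √(e i * e j) ≤ e i / 2 + e j / 2 := fun i j => by
    rw [Real.sqrt_mul (he i)]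
    nlinarith [Real.sq_sqrt (he i), Real.sq_sqrt (he j), sq_nonneg (√(e i) - √(e j))]
  have hcol' : ∑ i, ∑ j, ‖W j i‖ ^ 2 * e i ≤ ∑ i, e i := Finset.sum_le_sum fun i _ => by
    rw [← Finset.sum_mul]; exact mul_le_of_le_one_left (he i) (hcol i)
  have hrow' : ∑ i, ∑ j, ‖W j i‖ ^ 2 * e j ≤ ∑ i, e i := by
    rw [Finset.sum_comm]
    exact Finset.sum_le_sum fun j _ => by
      rw [← Finset.sum_mul]; exact mul_le_of_le_one_left (he j) (hrow j)
  calc ∑ i, ∑ j, ‖W j i‖ ^ 2 * √(e i * e j)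
      ≤ ∑ i, ∑ j, (‖W j i‖ ^ 2 * e i / 2 + ‖W j i‖ ^ 2 * e j / 2) :=
        Finset.sum_le_sum fun i _ => Finset.sum_le_sum fun j _ => by
          nlinarith [hamgm i j, sq_nonneg ‖W j i‖]
    _ ≤ ∑ i, e i := by
        simp only [Finset.sum_add_distrib, ← Finset.sum_div]
        linarith

lemma sum_sum_norm_add_diagonal_sq_div {e : d → ℝ} (he : ∀ i, 0 ≤ e i) {Y : Matrix d d ℂ}
    (hY : ∀ i, e i = 0 → Y i i = 0) :
    ∑ i, ∑ j, ‖(Y + diagonal fun i => (e i : ℂ)) i j‖ ^ 2 / √(e i * e j) =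
      ∑ i, ∑ j, ‖Y i j‖ ^ 2 / √(e i * e j) + 2 * ∑ i, (Y i i).re + ∑ i, e i := by
  have hdiag : ∀ i, ‖Y i i + e i‖ ^ 2 / √(e i * e i) =
      ‖Y i i‖ ^ 2 / √(e i * e i) + (2 * (Y i i).re + e i) := by
    intro i
    rw [Real.sqrt_mul_self (he i)]
    by_cases hi : e i = 0
    · simp [hi, hY i hi]
    · simp only [Complex.sq_norm, Complex.normSq_apply, Complex.add_re, Complex.add_im,
        Complex.ofReal_re, Complex.ofReal_im, add_zero]
      field_simp
      ring
  have hentry : ∀ i j, ‖(Y + diagonal fun i => (e i : ℂ)) i j‖ ^ 2 / √(e i * e j) =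
      ‖Y i j‖ ^ 2 / √(e i * e j) + if i = j then 2 * (Y i i).re + e i else 0 := by
    intro i j
    by_cases hij : i = j
    · subst hij; simp [hdiag]
    · simp [hij]
  simp only [hentry, Finset.sum_add_distrib, Finset.sum_ite_eq, Finset.mem_univ, if_true,
    Finset.mul_sum]
  ring

lemma re_trace_mul_diagonal_mul_mul_diagonal {Y : Matrix d d ℂ} (hY : Y.IsHermitian)
    (g : d → ℝ) :
    (Y * diagonal (fun i => (g i : ℂ)) * Y * diagonal (fun i => (g i : ℂ))).trace.re =
      ∑ i, ∑ j, ‖Y i j‖ ^ 2 * (g i * g j) := by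
  simp only [trace, diag, mul_apply, diagonal_apply, mul_ite, mul_zero, Finset.sum_ite_eq',
    Finset.mem_univ, if_true, Complex.re_sum]
  refine Finset.sum_congr rfl fun i _ => ?_
  rw [Finset.sum_mul, Complex.re_sum]
  refine Finset.sum_congr rfl fun j _ => ?_
  have hterm : Y i j * g j * Y j i * g i = ((‖Y i j‖ ^ 2 * (g i * g j) : ℝ) : ℂ) := by
    rw [← hY.apply j i, Complex.star_def]
    push_cast
    rw [← Complex.mul_conj']
    ring
  rw [hterm, Complex.ofReal_re]

section Eigenbasis

variable {σ X : Matrix d d ℂ}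

-- `(√0)⁻¹ = 0` reproduces the pseudo-inverse convention of `matPow` on the kernel of `σ`.
lemma matPow_neg_half_eq (hσ : σ.PosSemidef) :
    matPow σ (-(1/2)) = conjStarAlgAut ℂ _ hσ.1.eigenvectorUnitary
      (diagonal fun i => ((√(hσ.1.eigenvalues i))⁻¹ : ℝ)) := by
  conv_lhs => rw [hσ.1.eq_conjStarAlgAut_diagonal]
  rw [matPow, matFun_conjStarAlgAut_diagonal]
  congr 3 with i
  split_ifs with h
  · simp [h]
  · rw [Real.rpow_eq_pow, Real.rpow_neg (hσ.eigenvalues_nonneg i), Real.sqrt_eq_rpow]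

lemma Q2R_eq_sum_sum (hσ : σ.PosSemidef) (hX : X.IsHermitian) :
    Q2R X σ = ∑ i, ∑ j, ‖conjStarAlgAut ℂ _ (star hσ.1.eigenvectorUnitary) X i j‖ ^ 2 /
      √(hσ.1.eigenvalues i * hσ.1.eigenvalues j) := by
  set U := hσ.1.eigenvectorUnitary
  set e := hσ.1.eigenvalues
  set Y := conjStarAlgAut ℂ _ (star U) X
  have hY : Y.IsHermitian := IsSelfAdjoint.map hX _
  have hXY : X = conjStarAlgAut ℂ _ U Y := by
    rw [show Y = (conjStarAlgAut ℂ _ U).symm X by rw [conjStarAlgAut_symm],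
      StarAlgEquiv.apply_symm_apply]
  rw [Q2R, matPow_neg_half_eq hσ]
  conv_lhs => rw [hXY]
  rw [← map_mul, ← map_mul, ← map_mul, trace_conjStarAlgAut,
    re_trace_mul_diagonal_mul_mul_diagonal hY]
  refine Finset.sum_congr rfl fun i _ => Finset.sum_congr rfl fun j _ => ?_
  rw [div_eq_mul_inv, Real.sqrt_mul (hσ.eigenvalues_nonneg i), mul_inv]

lemma conjStarAlgAut_star_eigenvectorUnitary_apply_eq_zero (hσ : σ.IsHermitian)
    (hX : X.IsHermitian) (hXσ : suppLE X σ) {i j : d}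
    (hij : hσ.eigenvalues i = 0 ∨ hσ.eigenvalues j = 0) :
    conjStarAlgAut ℂ _ (star hσ.eigenvectorUnitary) X i j = 0 := by
  set U := hσ.eigenvectorUnitary
  have hcol : ∀ {i}, hσ.eigenvalues i = 0 → ∀ j, conjStarAlgAut ℂ _ (star U) X j i = 0 := by
    intro i hi j
    have hσv : σ *ᵥ ⇑(hσ.eigenvectorBasis i) = 0 := by
      rw [hσ.mulVec_eigenvectorBasis, hi, zero_smul]
    have hXv : X *ᵥ ⇑(hσ.eigenvectorBasis i) = 0 := hXσ hσv
    calc conjStarAlgAut ℂ _ (star U) X j i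
        = (star (U : Matrix d d ℂ) *ᵥ X *ᵥ (U : Matrix d d ℂ) *ᵥ Pi.single i 1) j := by
          rw [mulVec_mulVec, mulVec_mulVec, mulVec_single_one]
          simp
      _ = 0 := by rw [hσ.eigenvectorUnitary_mulVec, hXv, mulVec_zero, Pi.zero_apply]
  have hY : (conjStarAlgAut ℂ _ (star U) X).IsHermitian := IsSelfAdjoint.map hX _
  rcases hij with hi | hj
  · rw [← hY.apply i j, hcol hi j, star_zero]
  · exact hcol hj i

lemma traceNorm_sq_le_re_trace_mul_Q2R (hσ : σ.PosSemidef) (hX : X.IsHermitian)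
    (hXσ : suppLE X σ) :
    traceNorm X ^ 2 ≤ σ.trace.re * Q2R X σ := by
  set U := hσ.1.eigenvectorUnitary
  set e := hσ.1.eigenvalues
  set Y := conjStarAlgAut ℂ _ (star U) X
  have hY : Y.IsHermitian := IsSelfAdjoint.map hX _
  obtain ⟨W, hrow, hcol, hW⟩ := hY.exists_traceNorm_eq_re_trace_mul
  have htr : σ.trace.re = ∑ i, e i := by simp [hσ.1.trace_eq_sum_eigenvalues, e]
  rw [← traceNorm_conjStarAlgAut (star U) X, hW, Q2R_eq_sum_sum hσ hX, htr, mul_comm]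
  calc (Y * W).trace.re ^ 2
      ≤ (∑ i, ∑ j, ‖Y i j‖ ^ 2 / √(e i * e j)) * ∑ i, ∑ j, ‖W j i‖ ^ 2 * √(e i * e j) :=
        re_trace_mul_sq_le hσ.eigenvalues_nonneg
          (fun i j => conjStarAlgAut_star_eigenvectorUnitary_apply_eq_zero hσ.1 hX hXσ) W
    _ ≤ (∑ i, ∑ j, ‖Y i j‖ ^ 2 / √(e i * e j)) * ∑ i, e i :=
        mul_le_mul_of_nonneg_left (sum_sum_norm_sq_mul_sqrt_le hσ.eigenvalues_nonneg hrow hcol)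
          (by positivity)

lemma Q2R_add_self (hσ : σ.PosSemidef) (hX : X.IsHermitian) (hXσ : suppLE X σ) :
    Q2R (X + σ) σ = Q2R X σ + 2 * X.trace.re + σ.trace.re := by
  set U := hσ.1.eigenvectorUnitary
  set e := hσ.1.eigenvalues
  have hσdiag : conjStarAlgAut ℂ _ (star U) σ = diagonal fun i => (e i : ℂ) :=
    hσ.1.conjStarAlgAut_star_eigenvectorUnitary
  have htr : σ.trace.re = ∑ i, e i := by simp [hσ.1.trace_eq_sum_eigenvalues, e]
  rw [Q2R_eq_sum_sum hσ (hX.add hσ.1), Q2R_eq_sum_sum hσ hX, map_add, hσdiag,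
    sum_sum_norm_add_diagonal_sq_div hσ.eigenvalues_nonneg
      (fun i hi => conjStarAlgAut_star_eigenvectorUnitary_apply_eq_zero hσ.1 hX hXσ (.inl hi)),
    htr, ← trace_conjStarAlgAut (star U) X, trace, Complex.re_sum]
  rfl

end Eigenbasis

/-- `D₂(ρ‖σ) ≥ log(1 + ‖ρ − σ‖₁²)` for density matrices `ρ, σ`. -/
theorem D2_ge_log_one_add_traceDist_sq
    (ρ σ : Matrix d d ℂ) (hρ : IsDensity ρ) (hσ : IsDensity σ) :
    ((Real.log (1 + traceNorm (ρ - σ) ^ 2) : ℝ) : EReal) ≤ D2 ρ σ := by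
  by_cases hsupp : suppLE ρ σ
  swap
  · rw [D2, Q2, if_neg hsupp, ENNReal.log_top]
    exact le_top
  obtain ⟨hρ, hρ1⟩ := hρ
  obtain ⟨hσ, hσ1⟩ := hσ
  have hX : (ρ - σ).IsHermitian := hρ.1.sub hσ.1
  have hXσ : suppLE (ρ - σ) σ := fun v hv => by
    have hρv := hsupp hv
    simp only [LinearMap.mem_ker, mulVecLin_apply] at hv hρv ⊢
    rw [sub_mulVec, hρv, hv, sub_zero]
  have hQ : Q2R ρ σ = Q2R (ρ - σ) σ + 1 := by
    simpa [trace_sub, hρ1, hσ1] using Q2R_add_self hσ hX hXσ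
  have hbound : traceNorm (ρ - σ) ^ 2 ≤ Q2R (ρ - σ) σ := by
    simpa [hσ1] using traceNorm_sq_le_re_trace_mul_Q2R hσ hX hXσ
  have hpos : 0 < 1 + traceNorm (ρ - σ) ^ 2 := by positivity
  rw [D2, Q2, if_pos hsupp, ENNReal.log_ofReal_of_pos (by linarith), EReal.coe_le_coe_iff]
  exact Real.log_le_log hpos (by linarith)
end
end

section
/- For all density matrices ρ and σ on the same finite-dimensional complex Hilbert space with the support of ρ contained in the support of σ, the purified distance satisfies P²(ρ,σ) ≤ 1 − 1/Q₂(ρ‖σ); equivalently, D₂(ρ‖σ) ≥ −log(1 − P²(ρ,σ)). -/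
open scoped Matrix Kronecker BigOperators ENNReal ComplexOrder Classical

noncomputable section

variable {d : Type*} [Fintype d] [DecidableEq d]

/-! With `X = σ^{-1/4} ρ σ^{-1/4}` one has `Q₂ = Tr X²`, `1 = Tr ρ = Tr (X σ^{1/2})`, and, since
`(√ρ √σ)ᴴ (√ρ √σ) = (X^{1/2} σ^{3/4})ᴴ (X^{1/2} σ^{3/4})`, also
`F = ‖X^{1/2} σ^{3/4}‖₁ ≥ Re Tr (X^{1/2} σ^{3/4})`. In an eigenbasis `(vᵢ)` of `X` with
eigenvalues `xᵢ`, put `sᵢ = ⟨vᵢ, σ^{1/2} vᵢ⟩`. Jensen's inequality gives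
`sᵢ^{3/2} ≤ ⟨vᵢ, σ^{3/4} vᵢ⟩` and `sᵢ² ≤ ⟨vᵢ, σ vᵢ⟩`, so `∑ sᵢ² ≤ Tr σ = 1` and
`∑ √xᵢ sᵢ^{3/2} ≤ F`. Since `∑ xᵢ sᵢ = 1`, Hölder's inequality with exponents `3, 3/2` gives
`1 ≤ Q₂ F²`, i.e. `P² ≤ 1 - 1/Q₂`, and Cauchy–Schwarz gives `Q₂ ≥ 1`, which covers the case
`F > 1`, where `P = 0`. -/

open Matrix

section FunctionalCalculus

variable {A : Matrix d d ℂ}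

lemma conjTranspose_eigenvectorUnitary_mul (hA : A.IsHermitian) :
    (hA.eigenvectorUnitary : Matrix d d ℂ)ᴴ * hA.eigenvectorUnitary = 1 :=
  Unitary.coe_star_mul_self _

lemma eigenvectorUnitary_mul_conjTranspose (hA : A.IsHermitian) :
    (hA.eigenvectorUnitary : Matrix d d ℂ) * (hA.eigenvectorUnitary : Matrix d d ℂ)ᴴ = 1 :=
  Unitary.coe_mul_star_self _

lemma herFun_eq_cfc (hA : A.IsHermitian) (f : ℝ → ℝ) : herFun hA f = cfc f A := by
  rw [hA.cfc_eq, IsHermitian.cfc, Unitary.conjStarAlgAut_apply]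
  rfl

lemma herFun_id (hA : A.IsHermitian) : herFun hA id = A := by
  rw [herFun_eq_cfc]
  exact cfc_id ℝ A

lemma herFun_mul (hA : A.IsHermitian) (f g : ℝ → ℝ) :
    herFun hA f * herFun hA g = herFun hA (f * g) := by
  simp only [herFun_eq_cfc]
  exact (cfc_mul f g A (A.finite_real_spectrum.continuousOn f)
    (A.finite_real_spectrum.continuousOn g)).symm

lemma herFun_congr (hA : A.IsHermitian) {f g : ℝ → ℝ}
    (h : ∀ i, f (hA.eigenvalues i) = g (hA.eigenvalues i)) : herFun hA f = herFun hA g := by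
  simp only [herFun_eq_cfc]
  refine cfc_congr ?_
  rw [hA.spectrum_real_eq_range_eigenvalues]
  rintro - ⟨i, rfl⟩
  exact h i

lemma posSemidef_herFun (hA : A.IsHermitian) {f : ℝ → ℝ}
    (hf : ∀ i, 0 ≤ f (hA.eigenvalues i)) : (herFun hA f).PosSemidef :=
  (posSemidef_diagonal_iff.mpr fun i => by exact_mod_cast hf i).mul_mul_conjTranspose_same _

lemma conjTranspose_eigenvectorUnitary_mul_mul (hA : A.IsHermitian) :
    (hA.eigenvectorUnitary : Matrix d d ℂ)ᴴ * A * hA.eigenvectorUnitary =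
      diagonal (fun i => (hA.eigenvalues i : ℂ)) := by
  have := hA.conjStarAlgAut_star_eigenvectorUnitary
  simp only [Unitary.conjStarAlgAut_apply, Unitary.coe_star, star_star] at this
  exact this

lemma trace_herFun (hA : A.IsHermitian) (f : ℝ → ℝ) :
    (herFun hA f).trace = ∑ i, (f (hA.eigenvalues i) : ℂ) := by
  rw [herFun, trace_mul_cycle, conjTranspose_eigenvectorUnitary_mul, Matrix.one_mul,
    trace_diagonal]

lemma re_trace_herFun_mul (hA : A.IsHermitian) (f : ℝ → ℝ) (G : Matrix d d ℂ) :
    (herFun hA f * G).trace.re = ∑ i, f (hA.eigenvalues i) *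
      (((hA.eigenvectorUnitary : Matrix d d ℂ)ᴴ * G * hA.eigenvectorUnitary) i i).re := by
  set U : Matrix d d ℂ := ↑hA.eigenvectorUnitary
  have : (herFun hA f * G).trace =
      (diagonal (fun i => (f (hA.eigenvalues i) : ℂ)) * (Uᴴ * G * U)).trace := by
    rw [herFun, Matrix.mul_assoc, Matrix.mul_assoc, trace_mul_comm]
    simp only [U, Matrix.mul_assoc]
  rw [this, trace, Complex.re_sum]
  simp [diagonal_mul]

lemma re_trace_mul_eq_sum_eigenvalues_mul (hA : A.IsHermitian) (G : Matrix d d ℂ) :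
    (A * G).trace.re = ∑ i, hA.eigenvalues i *
      (((hA.eigenvectorUnitary : Matrix d d ℂ)ᴴ * G * hA.eigenvectorUnitary) i i).re := by
  simpa only [herFun_id, id] using re_trace_herFun_mul hA id G

lemma re_conjTranspose_mul_herFun_mul_apply (hA : A.IsHermitian) (f : ℝ → ℝ)
    (V : Matrix d d ℂ) (i : d) :
    ((Vᴴ * herFun hA f * V) i i).re = ∑ j, f (hA.eigenvalues j) *
      Complex.normSq (((hA.eigenvectorUnitary : Matrix d d ℂ)ᴴ * V) j i) := by
  set M := (hA.eigenvectorUnitary : Matrix d d ℂ)ᴴ * V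
  have hM : Vᴴ * herFun hA f * V = Mᴴ * diagonal (fun j => (f (hA.eigenvalues j) : ℂ)) * M := by
    simp only [herFun, M, conjTranspose_mul, conjTranspose_conjTranspose, Matrix.mul_assoc]
  rw [hM, mul_apply, Complex.re_sum]
  refine Finset.sum_congr rfl fun j _ => ?_
  rw [mul_diagonal, conjTranspose_apply, mul_right_comm, Complex.star_def,
    ← Complex.normSq_eq_conj_mul_self, ← Complex.ofReal_mul, Complex.ofReal_re, mul_comm]

end FunctionalCalculus

section MatPow

variable {A : Matrix d d ℂ}

lemma matPow_eq_herFun (hA : A.IsHermitian) (r : ℝ) :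
    matPow A r = herFun hA (fun x => if x = 0 then 0 else x ^ r) :=
  dif_pos hA

lemma matPow_eq_herFun_rpow (hA : A.PosSemidef) {r : ℝ} (hr : r ≠ 0) :
    matPow A r = herFun hA.1 (· ^ r) := by
  rw [matPow_eq_herFun hA.1]
  refine herFun_congr hA.1 fun i => ?_
  split_ifs with h
  · rw [h, Real.zero_rpow hr]
  · rfl

lemma posSemidef_matPow (hA : A.PosSemidef) (r : ℝ) : (matPow A r).PosSemidef := by
  rw [matPow_eq_herFun hA.1]
  refine posSemidef_herFun hA.1 fun i => ?_
  split_ifs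
  exacts [le_rfl, Real.rpow_nonneg (hA.eigenvalues_nonneg i) r]

lemma matPow_mul_matPow (hA : A.PosSemidef) (r s : ℝ) :
    matPow A r * matPow A s = matPow A (r + s) := by
  simp only [matPow_eq_herFun hA.1, herFun_mul]
  refine herFun_congr hA.1 fun i => ?_
  rcases (hA.eigenvalues_nonneg i).eq_or_lt with h | h
  · simp [← h]
  · simp [h.ne', Real.rpow_add h]

lemma matPow_one (hA : A.PosSemidef) : matPow A 1 = A := by
  rw [matPow_eq_herFun_rpow hA one_ne_zero]
  conv_rhs => rw [← herFun_id hA.1]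
  exact herFun_congr hA.1 fun i => Real.rpow_one _

lemma mul_matPow_zero (hA : A.PosSemidef) : A * matPow A 0 = A := by
  nth_rewrite 1 [← matPow_one hA]
  rw [matPow_mul_matPow hA, add_zero, matPow_one hA]

lemma mul_eq_zero_of_ker_le {A B M : Matrix d d ℂ}
    (h : LinearMap.ker A.mulVecLin ≤ LinearMap.ker B.mulVecLin) (hAM : A * M = 0) :
    B * M = 0 := by
  refine Matrix.toLin'.injective (LinearMap.ext fun v => ?_)
  have hv : M *ᵥ v ∈ LinearMap.ker A.mulVecLin := by simp [mulVec_mulVec, hAM]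
  simpa [mulVec_mulVec] using h hv

lemma mul_matPow_zero_of_suppLE {ρ σ : Matrix d d ℂ} (hσ : σ.PosSemidef) (h : suppLE ρ σ) :
    ρ * matPow σ 0 = ρ := by
  have hσ0 : σ * (1 - matPow σ 0) = 0 := by
    rw [Matrix.mul_sub, Matrix.mul_one, mul_matPow_zero hσ, sub_self]
  have := mul_eq_zero_of_ker_le h hσ0
  rwa [Matrix.mul_sub, Matrix.mul_one, sub_eq_zero, eq_comm] at this

end MatPow

lemma sum_normSq_apply_eq_re_conjTranspose_mul_self_apply {n : Type*} [Fintype n]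
    (M : Matrix n n ℂ) (i : n) :
    ∑ j, Complex.normSq (M j i) = ((Mᴴ * M) i i).re := by
  simp [mul_apply, Complex.re_sum, Complex.normSq_apply]

lemma sum_normSq_conjTranspose_mul_apply {U V : Matrix d d ℂ} (hU : U * Uᴴ = 1)
    (hV : Vᴴ * V = 1) (i : d) : ∑ j, Complex.normSq ((Uᴴ * V) j i) = 1 := by
  have : (Uᴴ * V)ᴴ * (Uᴴ * V) = 1 := by
    rw [conjTranspose_mul, conjTranspose_conjTranspose, Matrix.mul_assoc, ← Matrix.mul_assoc U,
      hU, Matrix.one_mul, hV]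
  rw [sum_normSq_apply_eq_re_conjTranspose_mul_self_apply, this]
  simp

lemma sum_re_conjTranspose_mul_mul_apply {A V : Matrix d d ℂ} (hV : V * Vᴴ = 1) :
    ∑ i, ((Vᴴ * A * V) i i).re = A.trace.re := by
  calc ∑ i, ((Vᴴ * A * V) i i).re = (Vᴴ * A * V).trace.re := by simp [trace, Complex.re_sum]
    _ = A.trace.re := by rw [trace_mul_cycle, hV, Matrix.one_mul]

/-- Jensen's inequality for `t ↦ t ^ p`, with the weights `|⟨uⱼ, vᵢ⟩|²` given by the
eigenvectors `uⱼ` of `A` and the columns `vᵢ` of `V`. -/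
lemma re_conjTranspose_mul_matPow_mul_apply_rpow_le {A V : Matrix d d ℂ} (hA : A.PosSemidef)
    (hV : Vᴴ * V = 1) (r : ℝ) {p : ℝ} (hp : 1 ≤ p) (i : d) :
    ((Vᴴ * matPow A r * V) i i).re ^ p ≤ ((Vᴴ * matPow A (r * p) * V) i i).re := by
  simp only [matPow_eq_herFun hA.1, re_conjTranspose_mul_herFun_mul_apply]
  set w := fun j => Complex.normSq (((hA.1.eigenvectorUnitary : Matrix d d ℂ)ᴴ * V) j i)
  have hpow : ∀ j, (if hA.1.eigenvalues j = 0 then 0 else hA.1.eigenvalues j ^ r) ^ p =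
      if hA.1.eigenvalues j = 0 then 0 else hA.1.eigenvalues j ^ (r * p) := fun j => by
    split_ifs
    · exact Real.zero_rpow (by linarith)
    · exact (Real.rpow_mul (hA.eigenvalues_nonneg j) r p).symm
  have := Real.rpow_arith_mean_le_arith_mean_rpow Finset.univ w
    (fun j => if hA.1.eigenvalues j = 0 then 0 else hA.1.eigenvalues j ^ r)
    (fun j _ => Complex.normSq_nonneg _)
    (sum_normSq_conjTranspose_mul_apply (eigenvectorUnitary_mul_conjTranspose hA.1) hV i)
    (fun j _ => by split_ifs; exacts [le_rfl, Real.rpow_nonneg (hA.eigenvalues_nonneg j) r]) hp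
  simpa only [hpow, mul_comm (w _)] using this

lemma normSq_apply_self_le_re_conjTranspose_mul_self_apply {n : Type*} [Fintype n]
    (M : Matrix n n ℂ) (i : n) :
    Complex.normSq (M i i) ≤ ((Mᴴ * M) i i).re := by
  rw [← sum_normSq_apply_eq_re_conjTranspose_mul_self_apply]
  exact Finset.single_le_sum (f := fun j => Complex.normSq (M j i))
    (fun j _ => Complex.normSq_nonneg _) (Finset.mem_univ i)

lemma re_trace_le_traceNorm (C : Matrix d d ℂ) : C.trace.re ≤ traceNorm C := by
  have hB := posSemidef_conjTranspose_mul_self C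
  set V : Matrix d d ℂ := ↑hB.1.eigenvectorUnitary
  set D := Vᴴ * C * V
  have htrace : D.trace = C.trace := by
    rw [trace_mul_cycle, eigenvectorUnitary_mul_conjTranspose, Matrix.one_mul]
  have hDD : Dᴴ * D = Vᴴ * (Cᴴ * C) * V := by
    simp only [D, conjTranspose_mul, conjTranspose_conjTranspose, Matrix.mul_assoc]
    rw [← Matrix.mul_assoc V, eigenvectorUnitary_mul_conjTranspose, Matrix.one_mul]
  have hnorm : traceNorm C = ∑ i, √(hB.1.eigenvalues i) := by
    rw [traceNorm, matPow_eq_herFun_rpow hB (one_div_ne_zero two_ne_zero), trace_herFun,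
      Complex.re_sum]
    simp [Real.sqrt_eq_rpow]
  rw [← htrace, trace, Complex.re_sum, hnorm]
  refine Finset.sum_le_sum fun i _ => ?_
  calc (D i i).re ≤ ‖D i i‖ := Complex.re_le_norm _
    _ = √(Complex.normSq (D i i)) := Complex.norm_def _
    _ ≤ √(hB.1.eigenvalues i) := by
      refine Real.sqrt_le_sqrt ((normSq_apply_self_le_re_conjTranspose_mul_self_apply D i).trans ?_)
      rw [hDD, conjTranspose_eigenvectorUnitary_mul_mul]
      simp

section Scalar

variable {ι : Type*} [Fintype ι] {x s : ι → ℝ}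

lemma one_le_sum_sq_of_sum_mul_eq_one (hxs : ∑ i, x i * s i = 1) (hs : ∑ i, s i ^ 2 ≤ 1) :
    1 ≤ ∑ i, x i ^ 2 := by
  have := Finset.sum_mul_sq_le_sq_mul_sq Finset.univ x s
  rw [hxs] at this
  nlinarith [Finset.sum_nonneg fun i (_ : i ∈ Finset.univ) => sq_nonneg (x i)]

/-- Hölder's inequality with exponents `3` and `3/2`, applied to `x s = x^{2/3} · x^{1/3} s`. -/
lemma sum_mul_pow_three_le (hx : ∀ i, 0 ≤ x i) (hs : ∀ i, 0 ≤ s i) :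
    (∑ i, x i * s i) ^ 3 ≤ (∑ i, x i ^ 2) * (∑ i, √(x i) * s i ^ (3 / 2 : ℝ)) ^ 2 := by
  have hholder := Real.inner_le_Lp_mul_Lq_of_nonneg Finset.univ
    (⟨by norm_num, by norm_num, by norm_num⟩ : Real.HolderConjugate 3 (3 / 2))
    (fun i _ => Real.rpow_nonneg (hx i) (2 / 3))
    (fun i _ => mul_nonneg (Real.rpow_nonneg (hx i) (1 / 3)) (hs i))
  have hxs : ∀ i, x i ^ (2 / 3 : ℝ) * (x i ^ (1 / 3 : ℝ) * s i) = x i * s i := fun i => by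
    rw [← mul_assoc, ← Real.rpow_add' (hx i) (by norm_num)]
    norm_num
  have hx2 : ∀ i, (x i ^ (2 / 3 : ℝ)) ^ (3 : ℝ) = x i ^ 2 := fun i => by
    rw [← Real.rpow_mul (hx i)]
    norm_num
  have hxs3 : ∀ i, (x i ^ (1 / 3 : ℝ) * s i) ^ (3 / 2 : ℝ) = √(x i) * s i ^ (3 / 2 : ℝ) :=
    fun i => by
      rw [Real.mul_rpow (Real.rpow_nonneg (hx i) _) (hs i), ← Real.rpow_mul (hx i),
        Real.sqrt_eq_rpow]
      norm_num
  simp only [hxs, hx2, hxs3] at hholder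
  have hA : 0 ≤ ∑ i, x i ^ 2 := Finset.sum_nonneg fun i _ => sq_nonneg _
  have hB : 0 ≤ ∑ i, √(x i) * s i ^ (3 / 2 : ℝ) :=
    Finset.sum_nonneg fun i _ => mul_nonneg (Real.sqrt_nonneg _) (Real.rpow_nonneg (hs i) _)
  calc (∑ i, x i * s i) ^ 3
      ≤ ((∑ i, x i ^ 2) ^ (1 / 3 : ℝ) *
          (∑ i, √(x i) * s i ^ (3 / 2 : ℝ)) ^ (1 / (3 / 2) : ℝ)) ^ 3 :=
        pow_le_pow_left₀ (Finset.sum_nonneg fun i _ => mul_nonneg (hx i) (hs i)) hholder 3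
    _ = (∑ i, x i ^ 2) * (∑ i, √(x i) * s i ^ (3 / 2 : ℝ)) ^ 2 := by
      rw [mul_pow, ← Real.rpow_mul_natCast hA, ← Real.rpow_mul_natCast hB]
      norm_num

end Scalar

section Sandwich

variable {ρ σ : Matrix d d ℂ}

def sandwiched (ρ σ : Matrix d d ℂ) : Matrix d d ℂ :=
  matPow σ (-(1 / 4)) * ρ * matPow σ (-(1 / 4))

lemma posSemidef_sandwiched (hρ : ρ.PosSemidef) (hσ : σ.PosSemidef) :
    (sandwiched ρ σ).PosSemidef := by
  have := hρ.mul_mul_conjTranspose_same (matPow σ (-(1 / 4)))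
  rwa [(posSemidef_matPow hσ _).1.eq] at this

lemma Q2R_eq_re_trace_sandwiched_mul_self (hσ : σ.PosSemidef) :
    Q2R ρ σ = (sandwiched ρ σ * sandwiched ρ σ).trace.re := by
  set S := matPow σ (-(1 / 4))
  have hhalf : matPow σ (-(1 / 2)) = S * S := by
    rw [matPow_mul_matPow hσ]
    norm_num
  calc Q2R ρ σ = ((ρ * S * (S * ρ * S)) * S).trace.re := by
        rw [Q2R, hhalf]
        simp only [Matrix.mul_assoc]
    _ = (sandwiched ρ σ * sandwiched ρ σ).trace.re := by
        rw [← trace_mul_comm]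
        simp only [sandwiched, S, Matrix.mul_assoc]

lemma trace_sandwiched_mul_matPow_half (hσ : σ.PosSemidef) (h : suppLE ρ σ) :
    (sandwiched ρ σ * matPow σ (1 / 2)).trace = ρ.trace := by
  set S := matPow σ (-(1 / 4))
  have hzero : S * matPow σ (1 / 2) * S = matPow σ 0 := by
    rw [matPow_mul_matPow hσ, matPow_mul_matPow hσ]
    norm_num
  calc (sandwiched ρ σ * matPow σ (1 / 2)).trace = (S * (ρ * S * matPow σ (1 / 2))).trace := by
        simp only [sandwiched, S, Matrix.mul_assoc]
    _ = (ρ * (S * matPow σ (1 / 2) * S)).trace := by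
        rw [trace_mul_comm]
        simp only [Matrix.mul_assoc]
    _ = ρ.trace := by rw [hzero, mul_matPow_zero_of_suppLE hσ h]

lemma conjTranspose_mul_self_matPow_half_mul {A : Matrix d d ℂ} (hA : A.PosSemidef)
    (B : Matrix d d ℂ) : (matPow A (1 / 2) * B)ᴴ * (matPow A (1 / 2) * B) = Bᴴ * A * B := by
  rw [conjTranspose_mul, (posSemidef_matPow hA _).1.eq, Matrix.mul_assoc, ← Matrix.mul_assoc _ _ B,
    matPow_mul_matPow hA]
  norm_num [matPow_one hA, Matrix.mul_assoc]

lemma fidelity_eq_traceNorm_sandwiched (hρ : ρ.PosSemidef) (hσ : σ.PosSemidef) :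
    fidelity ρ σ = traceNorm (matPow (sandwiched ρ σ) (1 / 2) * matPow σ (3 / 4)) := by
  have hσ' : ∀ r, (matPow σ r)ᴴ = matPow σ r := fun r => (posSemidef_matPow hσ r).1.eq
  have hsq : matPow σ (1 / 2) * ρ * matPow σ (1 / 2) =
      matPow σ (3 / 4) * sandwiched ρ σ * matPow σ (3 / 4) := by
    have hl : matPow σ (3 / 4) * matPow σ (-(1 / 4)) = matPow σ (1 / 2) := by
      rw [matPow_mul_matPow hσ]; norm_num
    have hr : matPow σ (-(1 / 4)) * matPow σ (3 / 4) = matPow σ (1 / 2) := by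
      rw [matPow_mul_matPow hσ]; norm_num
    calc matPow σ (1 / 2) * ρ * matPow σ (1 / 2)
        = matPow σ (3 / 4) * matPow σ (-(1 / 4)) * ρ *
            (matPow σ (-(1 / 4)) * matPow σ (3 / 4)) := by
          rw [hl, hr]
      _ = matPow σ (3 / 4) * sandwiched ρ σ * matPow σ (3 / 4) := by
          simp only [sandwiched, Matrix.mul_assoc]
  rw [fidelity, traceNorm, traceNorm, conjTranspose_mul_self_matPow_half_mul hρ,
    conjTranspose_mul_self_matPow_half_mul (posSemidef_sandwiched hρ hσ), hσ', hσ', hsq]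

end Sandwich

lemma exists_eigen_reduction {ρ σ : Matrix d d ℂ} (hρ : IsDensity ρ) (hσ : IsDensity σ)
    (h : suppLE ρ σ) :
    ∃ x s : d → ℝ, (∀ i, 0 ≤ x i) ∧ (∀ i, 0 ≤ s i) ∧ ∑ i, x i * s i = 1 ∧
      ∑ i, s i ^ 2 ≤ 1 ∧ Q2R ρ σ = ∑ i, x i ^ 2 ∧
      ∑ i, √(x i) * s i ^ (3 / 2 : ℝ) ≤ fidelity ρ σ := by
  have hX := posSemidef_sandwiched hρ.1 hσ.1
  set V : Matrix d d ℂ := ↑hX.1.eigenvectorUnitary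
  have hV := conjTranspose_eigenvectorUnitary_mul hX.1
  have hjensen := fun p hp i =>
    re_conjTranspose_mul_matPow_mul_apply_rpow_le hσ.1 hV (1 / 2) (p := p) hp i
  refine ⟨hX.1.eigenvalues, fun i => ((Vᴴ * matPow σ (1 / 2) * V) i i).re,
    hX.eigenvalues_nonneg, fun i => ?_, ?_, ?_, ?_, ?_⟩
  · exact (Complex.nonneg_iff.mp
      ((posSemidef_matPow hσ.1 _).conjTranspose_mul_mul_same V).diag_nonneg).1
  · rw [← re_trace_mul_eq_sum_eigenvalues_mul, trace_sandwiched_mul_matPow_half hσ.1 h, hρ.2,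
      Complex.one_re]
  · calc ∑ i, ((Vᴴ * matPow σ (1 / 2) * V) i i).re ^ 2
        ≤ ∑ i, ((Vᴴ * σ * V) i i).re := Finset.sum_le_sum fun i _ => by
          simpa [matPow_one hσ.1] using hjensen 2 one_le_two i
      _ = 1 := by
          rw [sum_re_conjTranspose_mul_mul_apply (eigenvectorUnitary_mul_conjTranspose hX.1), hσ.2,
            Complex.one_re]
  · rw [Q2R_eq_re_trace_sandwiched_mul_self hσ.1, re_trace_mul_eq_sum_eigenvalues_mul hX.1,
      conjTranspose_eigenvectorUnitary_mul_mul]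
    simp [sq]
  · calc ∑ i, √(hX.1.eigenvalues i) * ((Vᴴ * matPow σ (1 / 2) * V) i i).re ^ (3 / 2 : ℝ)
        ≤ ∑ i, √(hX.1.eigenvalues i) * ((Vᴴ * matPow σ (3 / 4) * V) i i).re :=
          Finset.sum_le_sum fun i _ => mul_le_mul_of_nonneg_left
            (by simpa only [show (1 / 2 : ℝ) * (3 / 2) = 3 / 4 by norm_num] using
              hjensen (3 / 2) (by norm_num) i) (Real.sqrt_nonneg _)
      _ = (matPow (sandwiched ρ σ) (1 / 2) * matPow σ (3 / 4)).trace.re := by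
          rw [matPow_eq_herFun_rpow hX (one_div_ne_zero two_ne_zero), re_trace_herFun_mul]
          simp only [Real.sqrt_eq_rpow, V]
      _ ≤ fidelity ρ σ := by
          rw [fidelity_eq_traceNorm_sandwiched hρ.1 hσ.1]
          exact re_trace_le_traceNorm _

section PurifiedDistance

variable {F Q : ℝ}

lemma ofReal_sqrt_one_sub_sq_sq_le (hQ : 1 ≤ Q) (hFQ : 1 ≤ F ^ 2 * Q) :
    ENNReal.ofReal (√(1 - F ^ 2) ^ 2) ≤ 1 - 1 / ENNReal.ofReal Q := by
  have hQ0 : 0 < Q := one_pos.trans_le hQ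
  have hinv : 1 / Q ≤ 1 := (div_le_one hQ0).mpr hQ
  rw [one_div, ← ENNReal.ofReal_inv_of_pos hQ0, ← ENNReal.ofReal_one,
    ← ENNReal.ofReal_sub _ (by positivity), Real.sq_sqrt', ← one_div]
  refine ENNReal.ofReal_le_ofReal (max_le ?_ (by linarith))
  linarith [(div_le_iff₀ hQ0).mpr hFQ]

lemma neg_log_ofReal_one_sub_sqrt_one_sub_sq_sq_le (hQ : 1 ≤ Q) (hFQ : 1 ≤ F ^ 2 * Q) :
    -ENNReal.log (ENNReal.ofReal (1 - √(1 - F ^ 2) ^ 2)) ≤ ENNReal.log (ENNReal.ofReal Q) := by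
  have hQ0 : 0 < Q := one_pos.trans_le hQ
  have hmin : 1 - √(1 - F ^ 2) ^ 2 = min (F ^ 2) 1 := by
    rw [Real.sq_sqrt']
    rcases le_total (F ^ 2) 1 with hF | hF
    · rw [max_eq_left (by linarith), min_eq_left hF]; ring
    · rw [max_eq_right (by linarith), min_eq_right hF]; ring
  have hmin0 : 0 < min (F ^ 2) 1 :=
    lt_min (pos_of_mul_pos_left (one_pos.trans_le hFQ) hQ0.le) one_pos
  have hprod : 1 ≤ min (F ^ 2) 1 * Q := by
    rcases min_choice (F ^ 2) 1 with h | h <;> rw [h] <;> linarith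
  rw [hmin, ENNReal.log_ofReal_of_pos hmin0, ENNReal.log_ofReal_of_pos hQ0, ← EReal.coe_neg,
    EReal.coe_le_coe_iff, neg_le_iff_add_nonneg, ← Real.log_mul hQ0.ne' hmin0.ne', mul_comm]
  exact Real.log_nonneg hprod

end PurifiedDistance

/-- For density matrices with `supp ρ ⊆ supp σ`, the purified distance satisfies
`P²(ρ,σ) ≤ 1 − 1/Q₂(ρ‖σ)`; equivalently, `D₂(ρ‖σ) ≥ −log(1 − P²(ρ,σ))`. -/
theorem purified_dist_le_of_Q2
    (ρ σ : Matrix d d ℂ) (hρ : IsDensity ρ) (hσ : IsDensity σ) (h : suppLE ρ σ) :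
    ENNReal.ofReal (purifiedDist ρ σ ^ 2) ≤ 1 - 1 / Q2 ρ σ ∧
      -(ENNReal.log (ENNReal.ofReal (1 - purifiedDist ρ σ ^ 2))) ≤ D2 ρ σ := by
  obtain ⟨x, s, hx, hs, hxs, hs2, hQ, hF⟩ := exists_eigen_reduction hρ hσ h
  have hQ1 : 1 ≤ Q2R ρ σ := hQ ▸ one_le_sum_sq_of_sum_mul_eq_one hxs hs2
  have hFQ : 1 ≤ fidelity ρ σ ^ 2 * Q2R ρ σ := by
    have hholder := sum_mul_pow_three_le hx hs
    rw [hxs, ← hQ, one_pow] at hholder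
    have hB : 0 ≤ ∑ i, √(x i) * s i ^ (3 / 2 : ℝ) :=
      Finset.sum_nonneg fun i _ => mul_nonneg (Real.sqrt_nonneg _) (Real.rpow_nonneg (hs i) _)
    nlinarith [pow_le_pow_left₀ hB hF 2]
  rw [D2, Q2, if_pos h, purifiedDist]
  exact ⟨ofReal_sqrt_one_sub_sq_sq_le hQ1 hFQ, neg_log_ofReal_one_sub_sqrt_one_sub_sq_sq_le hQ1 hFQ⟩
end
end

section
/- Let ρ be a density matrix on a bipartite system A⊗B. Then I_max(A:B)_ρ ≤ −log λ_min(ρ^A) − H_min(A|B)_ρ, where ρ^A = Tr_B ρ and λ_min(ρ^A) denotes the smallest nonzero eigenvalue of ρ^A. -/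
open scoped Matrix Kronecker BigOperators ENNReal ComplexOrder Classical

noncomputable section

variable {d : Type*} [Fintype d] [DecidableEq d]

/-- Max relative entropy `D_max(ρ‖σ) = log inf{t ≥ 0 : ρ ≤ t·σ}` (`+∞` if no such `t`). -/
def Dmax (ρ σ : Matrix d d ℂ) : EReal :=
  ENNReal.log (sInf {t : ℝ≥0∞ | t ≠ ∞ ∧ (t.toReal • σ - ρ).PosSemidef})

/-- The smallest nonzero eigenvalue of a matrix. -/
def lambdaMinPos (M : Matrix d d ℂ) : ℝ :=
  sInf {x : ℝ | x ≠ 0 ∧ (x : ℂ) ∈ spectrum ℂ M}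

variable {A B : Type*} [Fintype A] [DecidableEq A] [Fintype B] [DecidableEq B]

/-- Partial trace over the second tensor factor. -/
def ptrace2 (ρ : Matrix (A × B) (A × B) ℂ) : Matrix A A ℂ :=
  Matrix.of fun i j => ∑ b : B, ρ (i, b) (j, b)

/-- Max mutual information `I_max(A:B)_ρ = min_σ D_max(ρ ‖ ρ^A ⊗ σ)`. -/
def Imax (ρ : Matrix (A × B) (A × B) ℂ) : EReal :=
  ⨅ σ : {σ : Matrix B B ℂ // IsDensity σ}, Dmax ρ (ptrace2 ρ ⊗ₖ σ.1)

/-- Optimized conditional min-entropy `H_min(A|B)_ρ = −min_σ D_max(ρ ‖ I_A ⊗ σ)`. -/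
def Hmin (ρ : Matrix (A × B) (A × B) ℂ) : EReal :=
  -(⨅ σ : {σ : Matrix B B ℂ // IsDensity σ}, Dmax ρ ((1 : Matrix A A ℂ) ⊗ₖ σ.1))

/-! Let `P` be the support projection of `ρ_A` and `λ = λ_min(ρ_A)`, so that `λ P ≤ ρ_A`.
Since `Tr[ρ ((1 - P) ⊗ 1)] = Tr[ρ_A (1 - P)] = 0`, the state `ρ` lives on `supp ρ_A ⊗ B`;
compressing a bound `ρ ≤ t (1 ⊗ σ)` by `P ⊗ 1` therefore gives
`λ ρ ≤ t (λ P ⊗ σ) ≤ t (ρ_A ⊗ σ)`. Hence `D_max(ρ‖ρ_A ⊗ σ) ≤ -log λ + D_max(ρ‖1 ⊗ σ)` for every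
state `σ`, and minimising over `σ` gives the claim. -/

open scoped MatrixOrder

section LambdaMinPos

variable {n : Type*} [Fintype n] [DecidableEq n] {M : Matrix n n ℂ}

lemma finite_setOf_ne_zero_mem_spectrum (M : Matrix n n ℂ) :
    {x : ℝ | x ≠ 0 ∧ (x : ℂ) ∈ spectrum ℂ M}.Finite :=
  (M.finite_spectrum.preimage Complex.ofReal_injective.injOn).subset fun _ hx => hx.2

lemma lambdaMinPos_le {x : ℝ} (hx0 : x ≠ 0) (hx : x ∈ spectrum ℝ M) : lambdaMinPos M ≤ x :=
  csInf_le (finite_setOf_ne_zero_mem_spectrum M).bddBelow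
    ⟨hx0, (spectrum.algebraMap_mem_iff ℂ).2 hx⟩

lemma Matrix.PosSemidef.lambdaMinPos_nonneg (hM : M.PosSemidef) : 0 ≤ lambdaMinPos M :=
  Real.sInf_nonneg fun _ hx =>
    spectrum_nonneg_of_nonneg hM.nonneg ((spectrum.algebraMap_mem_iff ℂ).1 hx.2)

lemma Matrix.PosSemidef.lambdaMinPos_pos (hM : M.PosSemidef) (hM0 : M ≠ 0) :
    0 < lambdaMinPos M := by
  obtain ⟨i, hi⟩ : ∃ i, hM.1.eigenvalues i ≠ 0 := by
    by_contra! h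
    exact hM0 (hM.1.eigenvalues_eq_zero_iff.1 (funext h))
  have hne : {x : ℝ | x ≠ 0 ∧ (x : ℂ) ∈ spectrum ℂ M}.Nonempty :=
    ⟨_, hi, (spectrum.algebraMap_mem_iff ℂ).2 (hM.1.eigenvalues_mem_spectrum_real i)⟩
  exact hM.lambdaMinPos_nonneg.lt_of_ne' (hne.csInf_mem (finite_setOf_ne_zero_mem_spectrum M)).1

lemma Matrix.IsHermitian.exists_support_projection (hM : M.IsHermitian) :
    ∃ P : Matrix n n ℂ, IsStarProjection P ∧ M * P = M ∧ lambdaMinPos M • P ≤ M := by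
  set ind : ℝ → ℝ := fun x => if x = 0 then 0 else 1
  have hind : ContinuousOn ind (spectrum ℝ M) := M.finite_real_spectrum.continuousOn _
  refine ⟨cfc ind M, ⟨?_, cfc_predicate ind M⟩, ?_, ?_⟩
  · rw [IsIdempotentElem, ← cfc_mul ind ind M]
    congr 1
    ext x
    by_cases hx : x = 0 <;> simp [ind, hx]
  · calc M * cfc ind M = cfc (fun x => x * ind x) M := by rw [cfc_mul _ _ M, cfc_id' ℝ M]
      _ = M := by
        conv_rhs => rw [← cfc_id' ℝ M]
        congr 1
        ext x
        by_cases hx : x = 0 <;> simp [ind, hx]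
  · rw [← cfc_const_mul _ _ M]
    conv_rhs => rw [← cfc_id' ℝ M]
    refine cfc_mono fun x hx => ?_
    by_cases hx0 : x = 0
    · simp [ind, hx0]
    · simpa [ind, hx0] using lambdaMinPos_le hx0 hx

end LambdaMinPos

lemma Matrix.PosSemidef.mul_eq_zero_of_conjTranspose_mul_mul_eq_zero
    {m n 𝕜 : Type*} [Fintype n] [RCLike 𝕜] {M : Matrix n n 𝕜} (hM : M.PosSemidef)
    {X : Matrix n m 𝕜} (h : Xᴴ * M * X = 0) : M * X = 0 := by
  ext i j
  have hj : star (fun k => X k j) ⬝ᵥ (M *ᵥ fun k => X k j) = 0 := by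
    have hjj := congrFun (congrFun h j) j
    rw [Matrix.mul_assoc] at hjj
    simpa [Matrix.mul_apply, Matrix.mulVec, dotProduct] using hjj
  simpa [Matrix.mul_apply, Matrix.mulVec, dotProduct] using
    congrFun ((hM.dotProduct_mulVec_zero_iff _).1 hj) i

section PartialTrace

variable {m n : Type*} [Fintype n] {ρ : Matrix (m × n) (m × n) ℂ}

lemma ptrace2_eq_sum_submatrix (ρ : Matrix (m × n) (m × n) ℂ) :
    ptrace2 ρ = ∑ b, ρ.submatrix (fun i => (i, b)) (fun i => (i, b)) := by
  ext i j
  simp [ptrace2, Matrix.sum_apply]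

lemma posSemidef_ptrace2 (hρ : ρ.PosSemidef) : (ptrace2 ρ).PosSemidef := by
  rw [ptrace2_eq_sum_submatrix]
  exact Matrix.posSemidef_sum _ fun b _ => hρ.submatrix _

lemma trace_ptrace2 [Fintype m] (ρ : Matrix (m × n) (m × n) ℂ) :
    (ptrace2 ρ).trace = ρ.trace := by
  simp [Matrix.trace, ptrace2, Fintype.sum_prod_type]

lemma trace_mul_kronecker_one [Fintype m] [DecidableEq n] (ρ : Matrix (m × n) (m × n) ℂ)
    (N : Matrix m m ℂ) : (ρ * (N ⊗ₖ (1 : Matrix n n ℂ))).trace = (ptrace2 ρ * N).trace := by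
  simp only [Matrix.trace, Matrix.diag, Matrix.mul_apply, ptrace2, Matrix.kroneckerMap_apply,
    Matrix.one_apply, Fintype.sum_prod_type, Matrix.of_apply, Finset.sum_mul, mul_ite,
    mul_one, mul_zero, Finset.sum_ite_eq', Finset.mem_univ, if_true]
  exact Finset.sum_congr rfl fun _ _ => Finset.sum_comm

variable [Fintype m] [DecidableEq n]

lemma IsStarProjection.kronecker_one {𝕜 : Type*} [RCLike 𝕜] {P : Matrix m m 𝕜}
    (hP : IsStarProjection P) : IsStarProjection (P ⊗ₖ (1 : Matrix n n 𝕜)) :=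
  ⟨by rw [IsIdempotentElem, ← Matrix.mul_kronecker_mul, hP.isIdempotentElem.eq, Matrix.one_mul],
    by rw [IsSelfAdjoint, Matrix.star_eq_conjTranspose, Matrix.conjTranspose_kronecker,
      ← Matrix.star_eq_conjTranspose, hP.isSelfAdjoint.star_eq, Matrix.conjTranspose_one]⟩

/-- `(N ⊗ 1) ρ (N ⊗ 1) ≥ 0` has trace `Tr[ρ_A N] = 0`, hence vanishes. -/
lemma Matrix.PosSemidef.mul_kronecker_one_eq_zero (hρ : ρ.PosSemidef) {N : Matrix m m ℂ}
    (hN : IsStarProjection N) (h : ptrace2 ρ * N = 0) :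
    ρ * (N ⊗ₖ (1 : Matrix n n ℂ)) = 0 := by
  set Q : Matrix (m × n) (m × n) ℂ := N ⊗ₖ 1
  have hQ : IsStarProjection Q := hN.kronecker_one
  have hQH : Qᴴ = Q := hQ.isSelfAdjoint
  have htrace : (Qᴴ * ρ * Q).trace = 0 := by
    rw [hQH, Matrix.trace_mul_cycle, hQ.isIdempotentElem.eq, Matrix.trace_mul_comm,
      trace_mul_kronecker_one, h, Matrix.trace_zero]
  exact hρ.mul_eq_zero_of_conjTranspose_mul_mul_eq_zero
    (((hρ.conjTranspose_mul_mul_same Q).trace_eq_zero_iff).1 htrace)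

end PartialTrace

lemma Matrix.sub_kronecker {l m n p α : Type*} [Ring α] (X Y : Matrix l m α) (Z : Matrix n p α) :
    (X - Y) ⊗ₖ Z = X ⊗ₖ Z - Y ⊗ₖ Z := by
  ext
  simp [sub_mul]

lemma Matrix.kronecker_le_kronecker_of_nonneg_right {m n 𝕜 : Type*} [Fintype m] [Fintype n]
    [RCLike 𝕜] {X Y : Matrix m m 𝕜} {Z : Matrix n n 𝕜} (hXY : X ≤ Y) (hZ : 0 ≤ Z) : X ⊗ₖ Z ≤ Y ⊗ₖ Z := by
  rw [Matrix.le_iff, ← Matrix.sub_kronecker]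
  exact hXY.kronecker (Matrix.nonneg_iff_posSemidef.1 hZ)

section Marginal

variable {m n : Type*} [Fintype m] [Fintype n] [DecidableEq m] [DecidableEq n]
  {ρ : Matrix (m × n) (m × n) ℂ}

lemma Matrix.PosSemidef.kronecker_one_mul_mul_kronecker_one (hρ : ρ.PosSemidef)
    {P : Matrix m m ℂ} (hP : IsStarProjection P) (h : ptrace2 ρ * P = ptrace2 ρ) :
    (P ⊗ₖ (1 : Matrix n n ℂ)) * ρ * (P ⊗ₖ 1) = ρ := by
  have hρN : ρ * ((1 - P) ⊗ₖ (1 : Matrix n n ℂ)) = 0 :=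
    hρ.mul_kronecker_one_eq_zero hP.one_sub (by rw [Matrix.mul_sub, h, Matrix.mul_one, sub_self])
  rw [Matrix.sub_kronecker, Matrix.one_kronecker_one, Matrix.mul_sub, Matrix.mul_one,
    sub_eq_zero] at hρN
  have hNρ : (P ⊗ₖ (1 : Matrix n n ℂ)) * ρ = ρ := by
    have hPH : Pᴴ = P := hP.isSelfAdjoint
    simpa [Matrix.conjTranspose_kronecker, hPH, hρ.isHermitian.eq] using
      congrArg Matrix.conjTranspose hρN.symm
  rw [hNρ, ← hρN]

lemma lambdaMinPos_smul_le_smul_ptrace2_kronecker (hρ : ρ.PosSemidef) {σ : Matrix n n ℂ}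
    (hσ : σ.PosSemidef) {t : ℝ} (ht : 0 ≤ t) (h : ρ ≤ t • (1 ⊗ₖ σ)) :
    lambdaMinPos (ptrace2 ρ) • ρ ≤ t • (ptrace2 ρ ⊗ₖ σ) := by
  obtain ⟨P, hP, hρP, hlP⟩ := (posSemidef_ptrace2 hρ).isHermitian.exists_support_projection
  set l := lambdaMinPos (ptrace2 ρ)
  have hl : 0 ≤ l := (posSemidef_ptrace2 hρ).lambdaMinPos_nonneg
  have hPk := hP.kronecker_one (n := n)
  have hconj := hρ.kronecker_one_mul_mul_kronecker_one hP hρP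
  calc l • ρ = (P ⊗ₖ 1) * (l • ρ) * (P ⊗ₖ 1) := by
        rw [Matrix.mul_smul, Matrix.smul_mul, hconj]
    _ ≤ (P ⊗ₖ 1) * (l • t • (1 ⊗ₖ σ)) * (P ⊗ₖ 1) :=
        hPk.isSelfAdjoint.conjugate_le_conjugate (smul_le_smul_of_nonneg_left h hl)
    _ = t • ((l • P) ⊗ₖ σ) := by
        simp only [Matrix.mul_smul, Matrix.smul_mul, ← Matrix.mul_kronecker_mul, Matrix.mul_one,
          Matrix.one_mul, hP.isIdempotentElem.eq, Matrix.smul_kronecker, smul_comm l t]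
    _ ≤ t • (ptrace2 ρ ⊗ₖ σ) :=
        smul_le_smul_of_nonneg_left
          (Matrix.kronecker_le_kronecker_of_nonneg_right hlP hσ.nonneg) ht

end Marginal

lemma ENNReal.sInf_le_mul_sInf {S T : Set ℝ≥0∞} {c : ℝ≥0∞} (hc0 : c ≠ 0) (hc : c ≠ ∞)
    (h : ∀ s ∈ S, c * s ∈ T) : sInf T ≤ c * sInf S := by
  simp_rw [sInf_eq_iInf (s := S), ENNReal.mul_iInf_of_ne hc0 hc]
  exact le_iInf₂ fun s hs => sInf_le (h s hs)

lemma Dmax_le_neg_log_add_Dmax {n : Type*} [Fintype n] {ρ σ τ : Matrix n n ℂ} {c : ℝ}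
    (hc : 0 < c) (h : ∀ t : ℝ, 0 ≤ t → ρ ≤ t • σ → c • ρ ≤ t • τ) :
    Dmax ρ τ ≤ ((-Real.log c : ℝ) : EReal) + Dmax ρ σ := by
  have hscale : ∀ s ∈ {t : ℝ≥0∞ | t ≠ ∞ ∧ (t.toReal • σ - ρ).PosSemidef},
      ENNReal.ofReal c⁻¹ * s ∈ {t : ℝ≥0∞ | t ≠ ∞ ∧ (t.toReal • τ - ρ).PosSemidef} := by
    rintro s ⟨hs, hρσ⟩
    refine ⟨ENNReal.mul_ne_top ENNReal.ofReal_ne_top hs, ?_⟩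
    have hρτ := smul_le_smul_of_nonneg_left (h s.toReal ENNReal.toReal_nonneg hρσ)
      (inv_nonneg.2 hc.le)
    rwa [smul_smul, inv_mul_cancel₀ hc.ne', one_smul, smul_smul, ← ENNReal.toReal_ofReal
      (inv_nonneg.2 hc.le), ← ENNReal.toReal_mul] at hρτ
  calc Dmax ρ τ ≤ ENNReal.log (ENNReal.ofReal c⁻¹ * _) :=
        ENNReal.log_monotone (ENNReal.sInf_le_mul_sInf (by simpa using hc) ENNReal.ofReal_ne_top
          hscale)
    _ = ((-Real.log c : ℝ) : EReal) + Dmax ρ σ := by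
        rw [ENNReal.log_mul_add, ENNReal.log_ofReal_of_pos (inv_pos.2 hc), Real.log_inv]
        rfl

/-- **Lemma**: `I_max(A:B)_ρ ≤ −log λ_min(ρ^A) − H_min(A|B)_ρ`, where `λ_min(ρ^A)` is the
smallest nonzero eigenvalue of the reduced state. -/
theorem Imax_le_neg_log_lambdaMin_sub_Hmin
    (ρ : Matrix (A × B) (A × B) ℂ) (hρ : IsDensity ρ) :
    Imax ρ ≤ ((-Real.log (lambdaMinPos (ptrace2 ρ)) : ℝ) : EReal) - Hmin ρ := by
  set c : EReal := ((-Real.log (lambdaMinPos (ptrace2 ρ)) : ℝ) : EReal)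
  have hρA : ptrace2 ρ ≠ 0 := fun h0 => by
    simpa [h0, hρ.2] using trace_ptrace2 ρ
  have hl := (posSemidef_ptrace2 hρ.1).lambdaMinPos_pos hρA
  have hσ : ∀ σ : {σ : Matrix B B ℂ // IsDensity σ},
      Imax ρ - c ≤ Dmax ρ ((1 : Matrix A A ℂ) ⊗ₖ σ.1) := fun σ => by
    rw [EReal.sub_le_iff_le_add (.inl (EReal.coe_ne_bot _)) (.inl (EReal.coe_ne_top _)),
      add_comm]
    exact (iInf_le _ σ).trans <| Dmax_le_neg_log_add_Dmax hl fun t ht h =>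
      lambdaMinPos_smul_le_smul_ptrace2_kronecker hρ.1 σ.2.1 ht h
  rw [Hmin, sub_eq_add_neg, neg_neg, add_comm, ← EReal.sub_le_iff_le_add
    (.inl (EReal.coe_ne_bot _)) (.inl (EReal.coe_ne_top _))]
  exact le_iInf hσ
end
end
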